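/- On the Lie algebra A_{5,15}^{-1}⊕ℝ with structure equations (e^{15}+e^{25}, e^{25}, -e^{35}+e^{45}, -e^{45}, 0, 0), every closed 2-form F with F^3 ≠ 0 has nonzero coefficient of e^{14}-e^{23} and of e^{56} in the basis of closed 2-forms {e^{14}-e^{23}, e^{15}, e^{24}, e^{25}, e^{35}, e^{45}, e^{56}}. -/
import Mathlib


open ExteriorAlgebra

noncomputable section

/-- The exterior algebra Λ*(g*) of a 6-dimensional real Lie algebra g,
    identified with the exterior algebra on ℝ^6. -/
abbrev E6 : Type := ExteriorAlgebra ℝ (Fin 6 → ℝ)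

/-- The basis 1-forms e^1, ..., e^6 (0-indexed). -/
def e (i : Fin 6) : E6 := ι ℝ (Pi.single i 1)

/-- Structure equations: d of the basis 1-forms. -/
def d1 : Fin 6 → E6 :=
  ![e 0 * e 4 + e 1 * e 4,
    e 1 * e 4,
    -(e 2 * e 4) + e 3 * e 4,
    -(e 3 * e 4),
    0,
    0]

lemma esq (i : Fin 6) : e i * e i = 0 := ι_sq_zero _
lemma eswap (i j : Fin 6) : e j * e i = -(e i * e j) := by
  have h := ι_add_mul_swap (R := ℝ) (Pi.single i 1 : Fin 6 → ℝ) (Pi.single j 1)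
  exact eq_neg_of_add_eq_zero_right h
lemma esq' (i : Fin 6) (x : E6) : e i * (e i * x) = 0 := by
  rw [← mul_assoc, esq, zero_mul]
lemma eswap' (i j : Fin 6) (x : E6) : e j * (e i * x) = -(e i * (e j * x)) := by
  rw [← mul_assoc, eswap, neg_mul, mul_assoc]

lemma sw10 : e 1 * e 0 = -(e 0 * e 1) := eswap 0 1
lemma sw10' (x : E6) : e 1 * (e 0 * x) = -(e 0 * (e 1 * x)) := eswap' 0 1 x
lemma sw20 : e 2 * e 0 = -(e 0 * e 2) := eswap 0 2
lemma sw20' (x : E6) : e 2 * (e 0 * x) = -(e 0 * (e 2 * x)) := eswap' 0 2 x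
lemma sw21 : e 2 * e 1 = -(e 1 * e 2) := eswap 1 2
lemma sw21' (x : E6) : e 2 * (e 1 * x) = -(e 1 * (e 2 * x)) := eswap' 1 2 x
lemma sw30 : e 3 * e 0 = -(e 0 * e 3) := eswap 0 3
lemma sw30' (x : E6) : e 3 * (e 0 * x) = -(e 0 * (e 3 * x)) := eswap' 0 3 x
lemma sw31 : e 3 * e 1 = -(e 1 * e 3) := eswap 1 3
lemma sw31' (x : E6) : e 3 * (e 1 * x) = -(e 1 * (e 3 * x)) := eswap' 1 3 x
lemma sw32 : e 3 * e 2 = -(e 2 * e 3) := eswap 2 3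
lemma sw32' (x : E6) : e 3 * (e 2 * x) = -(e 2 * (e 3 * x)) := eswap' 2 3 x
lemma sw40 : e 4 * e 0 = -(e 0 * e 4) := eswap 0 4
lemma sw40' (x : E6) : e 4 * (e 0 * x) = -(e 0 * (e 4 * x)) := eswap' 0 4 x
lemma sw41 : e 4 * e 1 = -(e 1 * e 4) := eswap 1 4
lemma sw41' (x : E6) : e 4 * (e 1 * x) = -(e 1 * (e 4 * x)) := eswap' 1 4 x
lemma sw42 : e 4 * e 2 = -(e 2 * e 4) := eswap 2 4
lemma sw42' (x : E6) : e 4 * (e 2 * x) = -(e 2 * (e 4 * x)) := eswap' 2 4 x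
lemma sw43 : e 4 * e 3 = -(e 3 * e 4) := eswap 3 4
lemma sw43' (x : E6) : e 4 * (e 3 * x) = -(e 3 * (e 4 * x)) := eswap' 3 4 x
lemma sw50 : e 5 * e 0 = -(e 0 * e 5) := eswap 0 5
lemma sw50' (x : E6) : e 5 * (e 0 * x) = -(e 0 * (e 5 * x)) := eswap' 0 5 x
lemma sw51 : e 5 * e 1 = -(e 1 * e 5) := eswap 1 5
lemma sw51' (x : E6) : e 5 * (e 1 * x) = -(e 1 * (e 5 * x)) := eswap' 1 5 x
lemma sw52 : e 5 * e 2 = -(e 2 * e 5) := eswap 2 5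
lemma sw52' (x : E6) : e 5 * (e 2 * x) = -(e 2 * (e 5 * x)) := eswap' 2 5 x
lemma sw53 : e 5 * e 3 = -(e 3 * e 5) := eswap 3 5
lemma sw53' (x : E6) : e 5 * (e 3 * x) = -(e 3 * (e 5 * x)) := eswap' 3 5 x
lemma sw54 : e 5 * e 4 = -(e 4 * e 5) := eswap 4 5
lemma sw54' (x : E6) : e 5 * (e 4 * x) = -(e 4 * (e 5 * x)) := eswap' 4 5 x
lemma sq0 : e 0 * e 0 = 0 := esq 0
lemma sq0' (x : E6) : e 0 * (e 0 * x) = 0 := esq' 0 x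
lemma sq1 : e 1 * e 1 = 0 := esq 1
lemma sq1' (x : E6) : e 1 * (e 1 * x) = 0 := esq' 1 x
lemma sq2 : e 2 * e 2 = 0 := esq 2
lemma sq2' (x : E6) : e 2 * (e 2 * x) = 0 := esq' 2 x
lemma sq3 : e 3 * e 3 = 0 := esq 3
lemma sq3' (x : E6) : e 3 * (e 3 * x) = 0 := esq' 3 x
lemma sq4 : e 4 * e 4 = 0 := esq 4
lemma sq4' (x : E6) : e 4 * (e 4 * x) = 0 := esq' 4 x
lemma sq5 : e 5 * e 5 = 0 := esq 5
lemma sq5' (x : E6) : e 5 * (e 5 * x) = 0 := esq' 5 x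


lemma key (b : Fin 7 → ℝ) :
    (b 0 • (e 0 * e 3 - e 1 * e 2) + b 1 • (e 0 * e 4) + b 2 • (e 1 * e 3) +
      b 3 • (e 1 * e 4) + b 4 • (e 2 * e 4) + b 5 • (e 3 * e 4) + b 6 • (e 4 * e 5)) *
    (b 0 • (e 0 * e 3 - e 1 * e 2) + b 1 • (e 0 * e 4) + b 2 • (e 1 * e 3) +
      b 3 • (e 1 * e 4) + b 4 • (e 2 * e 4) + b 5 • (e 3 * e 4) + b 6 • (e 4 * e 5)) *
    (b 0 • (e 0 * e 3 - e 1 * e 2) + b 1 • (e 0 * e 4) + b 2 • (e 1 * e 3) +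
      b 3 • (e 1 * e 4) + b 4 • (e 2 * e 4) + b 5 • (e 3 * e 4) + b 6 • (e 4 * e 5)) =
    (-6 * b 0 ^ 2 * b 6) • (e 0 * (e 1 * (e 2 * (e 3 * (e 4 * e 5))))) := by
  simp only [sub_eq_add_neg, mul_add, add_mul, mul_neg, neg_mul, neg_neg, smul_mul_assoc,
    mul_smul_comm, smul_smul, mul_assoc, sw10, sw10',sw20, sw20',sw21, sw21',sw30, sw30',sw31, sw31',sw32, sw32',sw40, sw40',sw41, sw41',sw42, sw42',sw43, sw43',sw50, sw50',sw51, sw51',sw52, sw52',sw53, sw53',sw54, sw54',sq0, sq0',sq1, sq1',sq2, sq2',sq3, sq3',sq4, sq4',sq5, sq5', smul_neg, smul_zero, mul_zero, zero_mul,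
    add_zero, zero_add, neg_zero]
  module

/-- On A_{5,15}^{-1} ⊕ ℝ, every closed 2-form, written in the basis
    {e^{14}-e^{23}, e^{15}, e^{24}, e^{25}, e^{35}, e^{45}, e^{56}} of Z^2(g), that satisfies
    F ∧ F ∧ F ≠ 0, has nonzero coefficient of e^{14}-e^{23} and of e^{56}. -/
theorem stmt15 : ∀ b : Fin 7 → ℝ,
    (b 0 • (e 0 * e 3 - e 1 * e 2) + b 1 • (e 0 * e 4) + b 2 • (e 1 * e 3) +
      b 3 • (e 1 * e 4) + b 4 • (e 2 * e 4) + b 5 • (e 3 * e 4) + b 6 • (e 4 * e 5)) *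
    (b 0 • (e 0 * e 3 - e 1 * e 2) + b 1 • (e 0 * e 4) + b 2 • (e 1 * e 3) +
      b 3 • (e 1 * e 4) + b 4 • (e 2 * e 4) + b 5 • (e 3 * e 4) + b 6 • (e 4 * e 5)) *
    (b 0 • (e 0 * e 3 - e 1 * e 2) + b 1 • (e 0 * e 4) + b 2 • (e 1 * e 3) +
      b 3 • (e 1 * e 4) + b 4 • (e 2 * e 4) + b 5 • (e 3 * e 4) + b 6 • (e 4 * e 5)) ≠ 0 →
    b 0 ≠ 0 ∧ b 6 ≠ 0 := by
  intro b h
  rw [key b] at h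
  have hc : (-6 * b 0 ^ 2 * b 6 : ℝ) ≠ 0 := fun hz => h (by rw [hz, zero_smul])
  constructor
  · intro h0; exact hc (by rw [h0]; ring)
  · intro h6; exact hc (by rw [h6]; ring)
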